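/- Let μ be a probability measure on (0,∞) and T ⊂ (0,∞) a Borel set with the property: t ∈ T implies t − s ∈ T for μ-almost all s ≤ t. Define U = ∑_{n=0}^∞ μ^{*n} restricted to (0,t]. Then t ∈ T implies t − s ∈ T for U-almost all s ≤ t. -/
import Mathlib


open MeasureTheory Real

/-- Convolution of two measures on `ℝ`. -/
noncomputable def mconv (μ ν : Measure ℝ) : Measure ℝ :=
  (μ.prod ν).map fun p => p.1 + p.2

/-- `n`-th convolution power of a measure on `ℝ`; the 0-th power is the Dirac measure at 0. -/
noncomputable def convpow (μ : Measure ℝ) : ℕ → Measure ℝ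
  | 0 => Measure.dirac 0
  | n + 1 => mconv (convpow μ n) μ

lemma convpow_prob (μ : Measure ℝ) [IsProbabilityMeasure μ] (n : ℕ) :
    IsProbabilityMeasure (convpow μ n) := by
  induction n with
  | zero => exact Measure.dirac.isProbabilityMeasure
  | succ n ih =>
    rw [convpow, mconv]
    exact Measure.isProbabilityMeasure_map (by fun_prop)

lemma measT {T : Set ℝ} (hT : MeasurableSet T) (t : ℝ) :
    MeasurableSet {s : ℝ | s ≤ t → t - s ∈ T} := by
  have : {s : ℝ | s ≤ t → t - s ∈ T} = {s : ℝ | s ≤ t}ᶜ ∪ (fun s => t - s) ⁻¹' T := by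
    ext s; simp [imp_iff_not_or]
  rw [this]
  exact (measurableSet_Iic.compl).union (hT.preimage (measurable_const.sub measurable_id))

/-- the hereditary property of `T` with respect to `μ` passes to the renewal
measure `U = ∑_n μ^{*n}`. -/
theorem stmt_8 (μ : Measure ℝ) [IsProbabilityMeasure μ] (c : ℝ) (hc : 0 < c)
    (hsupp : μ (Set.Iio c) = 0)
    (T : Set ℝ) (hT : MeasurableSet T) (hTpos : T ⊆ Set.Ioi 0)
    (hher : ∀ t ∈ T, ∀ᵐ s ∂μ, s ≤ t → t - s ∈ T) :
    ∀ t ∈ T, ∀ᵐ s ∂(Measure.sum (convpow μ)), s ≤ t → t - s ∈ T := by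
  have key : ∀ n : ℕ, ∀ t ∈ T, ∀ᵐ s ∂(convpow μ n), s ≤ t → t - s ∈ T := by
    intro n
    induction n with
    | zero =>
      intro t ht
      rw [convpow, ae_dirac_iff (measT hT t)]
      intro _
      simpa using ht
    | succ n ih =>
      intro t ht
      haveI := convpow_prob μ n
      rw [convpow, mconv]
      have hmeas := measT hT t
      rw [ae_map_iff (by fun_prop) hmeas]
      rw [Filter.eventually_iff, mem_ae_iff]
      have hadd : Measurable fun p : ℝ × ℝ => p.1 + p.2 := measurable_fst.add measurable_snd
      have hm2 : MeasurableSet {p : ℝ × ℝ | p.1 + p.2 ≤ t ∧ t - (p.1 + p.2) ∉ T} :=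
        (hadd measurableSet_Iic).inter ((measurable_const.sub hadd) hT.compl)
      have hcompl : {x : ℝ × ℝ | x.1 + x.2 ≤ t → t - (x.1 + x.2) ∈ T}ᶜ
          = {p : ℝ × ℝ | p.1 + p.2 ≤ t ∧ t - (p.1 + p.2) ∉ T} := by
        ext p; simp [Classical.not_imp]
      rw [hcompl, Measure.measure_prod_null hm2]
      have hIH := ih t ht
      filter_upwards [hIH] with x hx
      by_cases hxt : x ≤ t
      · have htx : t - x ∈ T := hx hxt
        refine measure_mono_null ?_ (ae_iff.mp (hher (t - x) htx))
        intro y hy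
        simp only [Set.mem_preimage, Set.mem_setOf_eq, Classical.not_imp] at hy ⊢
        constructor
        · linarith [hy.1]
        · have : t - (x + y) = t - x - y := by ring
          rw [this] at hy
          exact hy.2
      · refine measure_mono_null ?_ hsupp
        intro y hy
        simp only [Set.mem_preimage, Set.mem_setOf_eq] at hy
        simp only [Set.mem_Iio]
        push_neg at hxt
        linarith [hy.1]
  intro t ht
  rw [Measure.ae_sum_iff' (measT hT t)]
  intro n
  exact key n t ht
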